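/- Let Φ = {e_i − e_j : i, j ∈ Fin 4, i ≠ j} ⊆ ℝ^4 be the root system of type A_3, whose Weyl group is the group of coordinate-permuting linear maps of ℝ^4 (isomorphic to S_4). Up to conjugacy by the Weyl group, Φ has exactly 32 nonempty closed subsets; among these, exactly 15 are special (empty symmetric part), exactly 4 are symmetric (empty special part), and exactly 13 have both nonempty symmetric part and nonempty special part. -/

import Mathlib

/-- The root system of type `A_3` in `ℝ^4`: the vectors `e_i - e_j` for `i ≠ j`. -/
def typeA3 : Set (Fin 4 → ℝ) :=
  {v | ∃ i j : Fin 4, i ≠ j ∧ v = Pi.single i (1 : ℝ) - Pi.single j (1 : ℝ)}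

/-- `T` is a closed subset of the root system of type `A_3`. -/
def IsClosedSubA3 (T : Set (Fin 4 → ℝ)) : Prop :=
  T ⊆ typeA3 ∧ ∀ α ∈ T, ∀ β ∈ T, α + β ∈ typeA3 → α + β ∈ T

/-- The symmetric part `T^r = {α ∈ T | -α ∈ T}`. -/
def symmPart (T : Set (Fin 4 → ℝ)) : Set (Fin 4 → ℝ) := {α ∈ T | -α ∈ T}

/-- The special part `T^u = {α ∈ T | -α ∉ T}`. -/
def specPart (T : Set (Fin 4 → ℝ)) : Set (Fin 4 → ℝ) := {α ∈ T | -α ∉ T}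

/-- The coordinate-permuting linear map of `ℝ^4` induced by a permutation `π` of `Fin 4`,
sending `e_i` to `e_{π i}`. The Weyl group of `A_3` consists exactly of these maps. -/
def permMap (π : Equiv.Perm (Fin 4)) : (Fin 4 → ℝ) → (Fin 4 → ℝ) :=
  fun v j => v (π.symm j)

/-- Conjugacy of subsets of the root system `A_3` under its Weyl group
(the coordinate-permuting maps of `ℝ^4`). -/
def ConjA3 (S T : Set (Fin 4 → ℝ)) : Prop :=
  ∃ π : Equiv.Perm (Fin 4), permMap π '' S = T


/-!
Write the root `e_i - e_j` as the ordered pair `(i, j)`. A sum of two roots is a root exactly when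
the pairs compose, `(i, j) + (j, l) = (i, l)` with `i ≠ l`. A subset of `Φ` is thus a set of
off-diagonal pairs, encoded as a 12-bit mask, and closedness, the symmetric and special parts and
the Weyl action all become finite bit computations.

The 32 masks in `representatives` are each the least element of their Weyl orbit, and every other
nonzero closed mask is sent to a smaller one by some permutation. Descending from any nonempty
closed subset therefore reaches a representative, and two representatives in the same orbit are
both least in it, hence equal. Both facts are checked by evaluation over all `2 ^ 12` masks.
-/

namespace A3

lemma ncard_filter_image {α β : Type*} [DecidableEq β] {f : α → β} {s : Finset α}
    (hf : Set.InjOn f s) (P : β → Prop) [DecidablePred P] :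
    {b ∈ (s.image f : Set β) | P b}.ncard = (s.filter fun a => P (f a)).card := by
  have h : {b ∈ (s.image f : Set β) | P b} = (s.image f).filter P := by ext; simp
  rw [h, Finset.filter_image, Set.ncard_coe_finset,
    Finset.card_image_of_injOn (hf.mono (Finset.coe_subset.2 (Finset.filter_subset _ _)))]

section Roots

variable {ι : Type*} [DecidableEq ι] {p q r : ι × ι}

def root (p : ι × ι) : ι → ℝ := Pi.single p.1 1 - Pi.single p.2 1

lemma root_apply (p : ι × ι) (x : ι) :
    root p x = (if x = p.1 then 1 else 0) - (if x = p.2 then 1 else 0) := by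
  simp [root, Pi.single_apply]

lemma root_apply_eq_one_iff (hp : p.1 ≠ p.2) {x : ι} : root p x = 1 ↔ x = p.1 := by
  rw [root_apply]
  split_ifs with h1 h2 <;> simp_all
  norm_num

lemma root_apply_le_one (p : ι × ι) (x : ι) : root p x ≤ 1 := by
  rw [root_apply]
  split_ifs <;> norm_num

lemma root_swap (p : ι × ι) : root p.swap = -root p := (neg_sub _ _).symm

lemma root_injOn : Set.InjOn (root (ι := ι)) {p | p.1 ≠ p.2} := by
  intro p (hp : p.1 ≠ p.2) q (hq : q.1 ≠ q.2) h
  have neg_h : root p.swap = root q.swap := by rw [root_swap, root_swap, h]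
  refine Prod.ext ?_ ?_
  · exact (root_apply_eq_one_iff hq).1 (h ▸ (root_apply_eq_one_iff hp).2 rfl)
  · exact (root_apply_eq_one_iff (Ne.symm hq)).1
      (neg_h ▸ (root_apply_eq_one_iff (Ne.symm hp)).2 rfl)

lemma root_ne_zero (hp : p.1 ≠ p.2) : root p ≠ 0 := fun h =>
  one_ne_zero ((root_apply_eq_one_iff hp).2 rfl ▸ congrFun h p.1)

lemma root_add_root (h : p.2 = q.1) : root p + root q = root (p.1, q.2) := by
  simp [root, h]

lemma composable_of_root_add_root_eq (hp : p.1 ≠ p.2) (hq : q.1 ≠ q.2) (hr : r.1 ≠ r.2)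
    (h : root p + root q = root r) :
    (p.2 = q.1 ∧ p.1 ≠ q.2) ∨ (q.2 = p.1 ∧ q.1 ≠ p.2) := by
  by_cases hpq : p.2 = q.1
  · refine Or.inl ⟨hpq, fun hc => root_ne_zero hr ?_⟩
    rw [← h, root_add_root hpq, hc]
    simp [root]
  by_cases hqp : q.2 = p.1
  · refine Or.inr ⟨hqp, fun hc => root_ne_zero hr ?_⟩
    rw [← h, add_comm, root_add_root hqp, hc]
    simp [root]
  -- Otherwise the sum is `≥ 1` at both `p.1` and `q.1`, while `root r` equals `1` only at `r.1`.
  exfalso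
  have at_p : (root p + root q) p.1 = 1 + if p.1 = q.1 then 1 else 0 := by
    simp [root_apply, hp, Ne.symm hqp]
  have at_q : (root p + root q) q.1 = 1 + if p.1 = q.1 then 1 else 0 := by
    simp [root_apply, hq, Ne.symm hpq, eq_comm, add_comm]
  rw [h] at at_p at_q
  split_ifs at at_p at_q with he
  · linarith [root_apply_le_one r p.1]
  · exact he (((root_apply_eq_one_iff hr).1 (by simpa using at_p)).trans
      ((root_apply_eq_one_iff hr).1 (by simpa using at_q)).symm)

end Roots

lemma mem_typeA3 {v : Fin 4 → ℝ} :
    v ∈ typeA3 ↔ ∃ p : Fin 4 × Fin 4, p.1 ≠ p.2 ∧ root p = v := by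
  simp [typeA3, root, eq_comm]

lemma root_mem_typeA3 {p : Fin 4 × Fin 4} (hp : p.1 ≠ p.2) : root p ∈ typeA3 :=
  mem_typeA3.2 ⟨p, hp, rfl⟩

lemma root_add_root_mem_typeA3 {p q : Fin 4 × Fin 4} (hp : p.1 ≠ p.2) (hq : q.1 ≠ q.2) :
    root p + root q ∈ typeA3 ↔ (p.2 = q.1 ∧ p.1 ≠ q.2) ∨ (q.2 = p.1 ∧ q.1 ≠ p.2) := by
  constructor
  · intro hs
    obtain ⟨r, hr, hsum⟩ := mem_typeA3.1 hs
    exact composable_of_root_add_root_eq hp hq hr hsum.symm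
  · rintro (⟨h, hne⟩ | ⟨h, hne⟩)
    · exact root_add_root h ▸ root_mem_typeA3 hne
    · exact add_comm (root p) _ ▸ root_add_root h ▸ root_mem_typeA3 hne

lemma ext_of_subset_typeA3 {S T : Set (Fin 4 → ℝ)} (hS : S ⊆ typeA3) (hT : T ⊆ typeA3)
    (h : ∀ p : Fin 4 × Fin 4, p.1 ≠ p.2 → (root p ∈ S ↔ root p ∈ T)) : S = T := by
  ext v
  constructor <;> intro hv
  · obtain ⟨p, hp, rfl⟩ := mem_typeA3.1 (hS hv)
    exact (h p hp).1 hv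
  · obtain ⟨p, hp, rfl⟩ := mem_typeA3.1 (hT hv)
    exact (h p hp).2 hv

section Weyl

variable (π σ : Equiv.Perm (Fin 4))

lemma permMap_root (p : Fin 4 × Fin 4) : permMap π (root p) = root (π p.1, π p.2) := by
  ext j
  simp [permMap, root_apply, Equiv.symm_apply_eq]

lemma permMap_one : permMap 1 = id := rfl

lemma permMap_mul : permMap (π * σ) = permMap π ∘ permMap σ := rfl

lemma permMap_add (v w : Fin 4 → ℝ) : permMap π (v + w) = permMap π v + permMap π w := rfl

lemma permMap_inv_permMap (v : Fin 4 → ℝ) : permMap π⁻¹ (permMap π v) = v := by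
  rw [← Function.comp_apply (f := permMap π⁻¹), ← permMap_mul, inv_mul_cancel, permMap_one, id]

lemma permMap_mem_typeA3 {v : Fin 4 → ℝ} (hv : v ∈ typeA3) : permMap π v ∈ typeA3 := by
  obtain ⟨p, hp, rfl⟩ := mem_typeA3.1 hv
  exact permMap_root π p ▸ root_mem_typeA3 (π.injective.ne hp)

lemma mem_image_permMap {S : Set (Fin 4 → ℝ)} {v : Fin 4 → ℝ} :
    v ∈ permMap π '' S ↔ permMap π⁻¹ v ∈ S := by
  constructor
  · rintro ⟨w, hw, rfl⟩
    rwa [permMap_inv_permMap]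
  · intro hv
    exact ⟨_, hv, by simpa using permMap_inv_permMap π⁻¹ v⟩

lemma IsClosedSubA3.image_permMap {T : Set (Fin 4 → ℝ)} (hT : IsClosedSubA3 T) :
    IsClosedSubA3 (permMap π '' T) := by
  refine ⟨?_, ?_⟩
  · rintro _ ⟨v, hv, rfl⟩
    exact permMap_mem_typeA3 π (hT.1 hv)
  · rintro _ ⟨α, hα, rfl⟩ _ ⟨β, hβ, rfl⟩ hsum
    rw [← permMap_add] at hsum ⊢
    have hsum' := permMap_mem_typeA3 π⁻¹ hsum
    rw [permMap_inv_permMap] at hsum'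
    exact ⟨_, hT.2 α hα β hβ hsum', rfl⟩

end Weyl

lemma conjA3_refl (S : Set (Fin 4 → ℝ)) : ConjA3 S S := ⟨1, by simp [permMap_one]⟩

lemma ConjA3.symm {S T : Set (Fin 4 → ℝ)} (h : ConjA3 S T) : ConjA3 T S := by
  obtain ⟨π, rfl⟩ := h
  exact ⟨π⁻¹, by rw [Set.image_image]; simp [permMap_inv_permMap]⟩

lemma ConjA3.trans {S T U : Set (Fin 4 → ℝ)} (h : ConjA3 S T) (h' : ConjA3 T U) :
    ConjA3 S U := by
  obtain ⟨π, rfl⟩ := h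
  obtain ⟨σ, rfl⟩ := h'
  exact ⟨σ * π, by rw [permMap_mul, Set.image_comp]⟩

section Masks

def offDiagPairs : List (Fin 4 × Fin 4) := (List.finRange 4).offDiag

/-- Bit `idx p` of a mask records whether the root `e_{p.1} - e_{p.2}` is present. -/
def idx (p : Fin 4 × Fin 4) : ℕ := offDiagPairs.idxOf p

def pairAt (k : ℕ) : Fin 4 × Fin 4 := offDiagPairs.getD k (0, 0)

lemma mem_offDiagPairs : ∀ p : Fin 4 × Fin 4, p ∈ offDiagPairs ↔ p.1 ≠ p.2 := by decide

lemma idx_lt : ∀ p : Fin 4 × Fin 4, p.1 ≠ p.2 → idx p < 12 := by decide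

lemma pairAt_idx : ∀ p : Fin 4 × Fin 4, p.1 ≠ p.2 → pairAt (idx p) = p := by decide

lemma pairAt_fst_ne_snd : ∀ k < 12, (pairAt k).1 ≠ (pairAt k).2 := by decide

lemma idx_pairAt : ∀ k < 12, idx (pairAt k) = k := by decide

def ofBits (f : ℕ → Bool) : ℕ := ∑ k ∈ Finset.range 12 with f k, 2 ^ k

lemma testBit_ofBits (f : ℕ → Bool) (k : ℕ) : (ofBits f).testBit k ↔ k < 12 ∧ f k := by
  rw [ofBits, ← Nat.mem_bitIndices, ← List.mem_toFinset, Finset.toFinset_bitIndices_sum_two_pow]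
  simp

lemma ofBits_lt (f : ℕ → Bool) : ofBits f < 2 ^ 12 :=
  Nat.geomSum_lt le_rfl fun _ hk => Finset.mem_range.1 (Finset.mem_filter.1 hk).1

def rootSet (m : ℕ) : Set (Fin 4 → ℝ) :=
  {v | ∃ p : Fin 4 × Fin 4, p.1 ≠ p.2 ∧ m.testBit (idx p) ∧ root p = v}

variable {m : ℕ}

lemma rootSet_subset_typeA3 (m : ℕ) : rootSet m ⊆ typeA3 := by
  rintro _ ⟨p, hp, -, rfl⟩
  exact root_mem_typeA3 hp

lemma root_mem_rootSet {p : Fin 4 × Fin 4} (hp : p.1 ≠ p.2) :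
    root p ∈ rootSet m ↔ m.testBit (idx p) :=
  ⟨fun ⟨_, hq, hbit, he⟩ => root_injOn hq hp he ▸ hbit, fun h => ⟨p, hp, h, rfl⟩⟩

lemma exists_mem_rootSet_iff {P : (Fin 4 → ℝ) → Prop} :
    (∃ v ∈ rootSet m, P v) ↔ ∃ k < 12, m.testBit k ∧ P (root (pairAt k)) := by
  constructor
  · rintro ⟨_, ⟨p, hp, hbit, rfl⟩, hP⟩
    exact ⟨idx p, idx_lt p hp, hbit, by rwa [pairAt_idx p hp]⟩
  · rintro ⟨k, hk, hbit, hP⟩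
    refine ⟨_, (root_mem_rootSet (pairAt_fst_ne_snd k hk)).2 ?_, hP⟩
    rwa [idx_pairAt k hk]

lemma lt_twelve_of_testBit (hm : m < 2 ^ 12) {k : ℕ} (hk : m.testBit k) : k < 12 :=
  (Nat.pow_lt_pow_iff_right (by norm_num)).1 ((Nat.ge_two_pow_of_testBit hk).trans_lt hm)

lemma rootSet_nonempty_iff (hm : m < 2 ^ 12) : (rootSet m).Nonempty ↔ m ≠ 0 := by
  have h := exists_mem_rootSet_iff (m := m) (P := fun _ => True)
  simp only [and_true] at h
  rw [Set.Nonempty, h]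
  constructor
  · rintro ⟨k, -, hk⟩ rfl
    simp at hk
  · intro h0
    obtain ⟨k, hk⟩ := Nat.exists_testBit_of_ne_zero h0
    exact ⟨k, lt_twelve_of_testBit hm hk, hk⟩

lemma rootSet_injOn : Set.InjOn rootSet (Set.Iio (2 ^ 12)) := by
  intro m hm m' hm' h
  refine Nat.eq_of_testBit_eq fun k => Bool.eq_iff_iff.2 ?_
  by_cases hk : k < 12
  · rw [← idx_pairAt k hk, ← root_mem_rootSet (pairAt_fst_ne_snd k hk),
      ← root_mem_rootSet (pairAt_fst_ne_snd k hk), h]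
  · exact iff_of_false (fun h => hk (lt_twelve_of_testBit hm h))
      (fun h => hk (lt_twelve_of_testBit hm' h))

lemma exists_rootSet_eq {T : Set (Fin 4 → ℝ)} (hT : T ⊆ typeA3) :
    ∃ m < 2 ^ 12, rootSet m = T := by
  classical
  refine ⟨ofBits fun k => decide (root (pairAt k) ∈ T), ofBits_lt _,
    ext_of_subset_typeA3 (rootSet_subset_typeA3 _) hT fun p hp => ?_⟩
  rw [root_mem_rootSet hp, testBit_ofBits, pairAt_idx p hp]
  simp [idx_lt p hp]

def relabel (π : Equiv.Perm (Fin 4)) (m : ℕ) : ℕ :=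
  ofBits fun k => m.testBit (idx (π⁻¹ (pairAt k).1, π⁻¹ (pairAt k).2))

lemma relabel_lt (π : Equiv.Perm (Fin 4)) (m : ℕ) : relabel π m < 2 ^ 12 := ofBits_lt _

lemma image_permMap_rootSet (π : Equiv.Perm (Fin 4)) (m : ℕ) :
    permMap π '' rootSet m = rootSet (relabel π m) := by
  refine ext_of_subset_typeA3 ?_ (rootSet_subset_typeA3 _) fun p hp => ?_
  · rintro _ ⟨v, hv, rfl⟩
    exact permMap_mem_typeA3 π (rootSet_subset_typeA3 m hv)
  rw [mem_image_permMap, permMap_root, root_mem_rootSet ((π⁻¹).injective.ne hp),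
    root_mem_rootSet hp, relabel, testBit_ofBits, pairAt_idx p hp]
  simp [idx_lt p hp]

def composableTriples : List (ℕ × ℕ × ℕ) :=
  ((offDiagPairs ×ˢ offDiagPairs).filter fun (p, q) => p.2 = q.1 ∧ p.1 ≠ q.2).map
    fun (p, q) => (idx p, idx q, idx (p.1, q.2))

def isClosedMask (m : ℕ) : Bool :=
  composableTriples.all fun t => !m.testBit t.1 || !m.testBit t.2.1 || m.testBit t.2.2

lemma isClosedMask_iff : isClosedMask m ↔ ∀ p q : Fin 4 × Fin 4, p.1 ≠ p.2 → q.1 ≠ q.2 →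
    p.2 = q.1 → p.1 ≠ q.2 → m.testBit (idx p) → m.testBit (idx q) →
      m.testBit (idx (p.1, q.2)) := by
  simp [isClosedMask, composableTriples, mem_offDiagPairs]
  grind

lemma isClosedSubA3_rootSet_iff : IsClosedSubA3 (rootSet m) ↔ isClosedMask m := by
  rw [isClosedMask_iff]
  constructor
  · intro h p q hp hq hpq hne hbp hbq
    rw [← root_mem_rootSet hne, ← root_add_root hpq]
    exact h.2 _ ((root_mem_rootSet hp).2 hbp) _ ((root_mem_rootSet hq).2 hbq)
      ((root_add_root_mem_typeA3 hp hq).2 (Or.inl ⟨hpq, hne⟩))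
  · refine fun h => ⟨rootSet_subset_typeA3 m, ?_⟩
    rintro _ ⟨p, hp, hbp, rfl⟩ _ ⟨q, hq, hbq, rfl⟩ hsum
    rcases (root_add_root_mem_typeA3 hp hq).1 hsum with ⟨hpq, hne⟩ | ⟨hqp, hne⟩
    · rw [root_add_root hpq, root_mem_rootSet hne]
      exact h p q hp hq hpq hne hbp hbq
    · rw [add_comm, root_add_root hqp, root_mem_rootSet hne]
      exact h q p hq hp hqp hne hbq hbp

def hasSymmetricRoot (m : ℕ) : Bool :=
  (List.range 12).any fun k => m.testBit k && m.testBit (idx (pairAt k).swap)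

def hasSpecialRoot (m : ℕ) : Bool :=
  (List.range 12).any fun k => m.testBit k && !m.testBit (idx (pairAt k).swap)

lemma neg_root_mem_rootSet {k : ℕ} (hk : k < 12) :
    -root (pairAt k) ∈ rootSet m ↔ m.testBit (idx (pairAt k).swap) := by
  rw [← root_swap, root_mem_rootSet (pairAt_fst_ne_snd k hk).symm]

lemma symmPart_rootSet_nonempty_iff : (symmPart (rootSet m)).Nonempty ↔ hasSymmetricRoot m := by
  simp only [Set.Nonempty, symmPart, Set.mem_sep_iff, exists_mem_rootSet_iff, hasSymmetricRoot,
    List.any_eq_true, List.mem_range, Bool.and_eq_true]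
  exact exists_congr fun k => and_congr_right fun hk => and_congr_right fun _ =>
    neg_root_mem_rootSet hk

lemma specPart_rootSet_nonempty_iff : (specPart (rootSet m)).Nonempty ↔ hasSpecialRoot m := by
  simp only [Set.Nonempty, specPart, Set.mem_sep_iff, exists_mem_rootSet_iff, hasSpecialRoot,
    List.any_eq_true, List.mem_range, Bool.and_eq_true, Bool.not_eq_true', ← Bool.not_eq_true]
  exact exists_congr fun k => and_congr_right fun hk => and_congr_right fun _ =>
    not_congr (neg_root_mem_rootSet hk)

end Masks

section Classification

def representatives : List ℕ :=
  [1, 3, 7, 9, 18, 19, 20, 22, 23, 27, 54, 55, 63, 90, 98, 122, 219, 292, 293, 295, 301, 310, 311,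
    319, 382, 511, 660, 876, 892, 1020, 2029, 4095]

lemma representatives_spec :
    ∀ r ∈ representatives, r < 2 ^ 12 ∧ r ≠ 0 ∧ isClosedMask r := by
  decide

lemma le_relabel_of_mem_representatives :
    ∀ r ∈ representatives, ∀ π : Equiv.Perm (Fin 4), r ≤ relabel π r := by
  decide +kernel

lemma exists_relabel_lt {m : ℕ} (hm : m < 2 ^ 12) (hc : isClosedMask m) (h0 : m ≠ 0)
    (hr : m ∉ representatives) : ∃ π : Equiv.Perm (Fin 4), relabel π m < m := by
  have hall : (List.range (2 ^ 12)).all fun m => !isClosedMask m || m == 0 ||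
      representatives.contains m || decide (∃ π : Equiv.Perm (Fin 4), relabel π m < m) := by
    decide +kernel
  simpa [hc, h0, hr] using List.all_eq_true.1 hall m (List.mem_range.2 hm)

lemma exists_mem_representatives_conjA3_rootSet (m : ℕ) (hm : m < 2 ^ 12)
    (hc : isClosedMask m) (h0 : m ≠ 0) :
    ∃ r ∈ representatives, ConjA3 (rootSet m) (rootSet r) := by
  induction m using Nat.strong_induction_on with
  | _ m ih =>
  by_cases hr : m ∈ representatives
  · exact ⟨m, hr, conjA3_refl _⟩
  obtain ⟨π, hlt⟩ := exists_relabel_lt hm hc h0 hr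
  have hc' : isClosedMask (relabel π m) := by
    rw [← isClosedSubA3_rootSet_iff, ← image_permMap_rootSet]
    exact IsClosedSubA3.image_permMap π (isClosedSubA3_rootSet_iff.2 hc)
  have h0' : relabel π m ≠ 0 := by
    rw [← rootSet_nonempty_iff (relabel_lt π m), ← image_permMap_rootSet]
    exact ((rootSet_nonempty_iff hm).2 h0).image _
  obtain ⟨r, hr, h⟩ := ih _ hlt (relabel_lt π m) hc' h0'
  exact ⟨r, hr, ConjA3.trans ⟨π, image_permMap_rootSet π m⟩ h⟩

lemma exists_mem_representatives_conjA3 {T : Set (Fin 4 → ℝ)} (hT : T.Nonempty)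
    (hcl : IsClosedSubA3 T) : ∃ r ∈ representatives, ConjA3 T (rootSet r) := by
  obtain ⟨m, hm, rfl⟩ := exists_rootSet_eq hcl.1
  exact exists_mem_representatives_conjA3_rootSet m hm (isClosedSubA3_rootSet_iff.1 hcl)
    ((rootSet_nonempty_iff hm).1 hT)

lemma eq_of_conjA3_rootSet {r r' : ℕ} (hr : r ∈ representatives) (hr' : r' ∈ representatives)
    (h : ConjA3 (rootSet r) (rootSet r')) : r = r' := by
  have key {a b : ℕ} (ha : a ∈ representatives) (hb : b ∈ representatives)
      (hab : ConjA3 (rootSet a) (rootSet b)) : a ≤ b := by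
    obtain ⟨π, hπ⟩ := hab
    rw [image_permMap_rootSet] at hπ
    rw [← rootSet_injOn (relabel_lt π a) (representatives_spec b hb).1 hπ]
    exact le_relabel_of_mem_representatives a ha π
  exact le_antisymm (key hr hr' h) (key hr' hr (ConjA3.symm h))

lemma nonempty_isClosedSubA3_rootSet {r : ℕ} (hr : r ∈ representatives) :
    (rootSet r).Nonempty ∧ IsClosedSubA3 (rootSet r) :=
  have ⟨hlt, h0, hc⟩ := representatives_spec r hr
  ⟨(rootSet_nonempty_iff hlt).2 h0, isClosedSubA3_rootSet_iff.2 hc⟩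

end Classification

end A3

open A3 in
/-- Up to conjugacy by the Weyl group, the root system of type `A_3` has
exactly 32 nonempty closed subsets: 15 special, 4 symmetric, and 13 with both parts
nonempty. -/
theorem a3_closed_subset_classification :
    ∃ R : Finset (Set (Fin 4 → ℝ)),
      (∀ T ∈ R, T.Nonempty ∧ IsClosedSubA3 T) ∧
      (∀ T ∈ R, ∀ T' ∈ R, ConjA3 T T' → T = T') ∧
      (∀ T : Set (Fin 4 → ℝ), T.Nonempty → IsClosedSubA3 T → ∃ T' ∈ R, ConjA3 T T') ∧
      R.card = 32 ∧
      {T ∈ (R : Set (Set (Fin 4 → ℝ))) | symmPart T = ∅}.ncard = 15 ∧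
      {T ∈ (R : Set (Set (Fin 4 → ℝ))) | specPart T = ∅}.ncard = 4 ∧
      {T ∈ (R : Set (Set (Fin 4 → ℝ))) |
        (symmPart T).Nonempty ∧ (specPart T).Nonempty}.ncard = 13 := by
  classical
  have hinj : Set.InjOn rootSet (representatives.toFinset : Set ℕ) :=
    rootSet_injOn.mono fun r hr => (representatives_spec r (List.mem_toFinset.1 hr)).1
  refine ⟨representatives.toFinset.image rootSet, ?_, ?_, ?_, ?_, ?_, ?_, ?_⟩
  · simp only [Finset.mem_image, List.mem_toFinset]
    rintro _ ⟨r, hr, rfl⟩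
    exact nonempty_isClosedSubA3_rootSet hr
  · simp only [Finset.mem_image, List.mem_toFinset]
    rintro _ ⟨r, hr, rfl⟩ _ ⟨r', hr', rfl⟩ h
    rw [eq_of_conjA3_rootSet hr hr' h]
  · intro T hT hcl
    obtain ⟨r, hr, h⟩ := exists_mem_representatives_conjA3 hT hcl
    exact ⟨rootSet r, Finset.mem_image_of_mem _ (List.mem_toFinset.2 hr), h⟩
  · rw [Finset.card_image_of_injOn hinj]
    decide
  · rw [ncard_filter_image hinj, Finset.filter_congr fun r _ => by
      rw [← Set.not_nonempty_iff_eq_empty, symmPart_rootSet_nonempty_iff]]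
    decide
  · rw [ncard_filter_image hinj, Finset.filter_congr fun r _ => by
      rw [← Set.not_nonempty_iff_eq_empty, specPart_rootSet_nonempty_iff]]
    decide
  · rw [ncard_filter_image hinj, Finset.filter_congr fun r _ => by
      rw [symmPart_rootSet_nonempty_iff, specPart_rootSet_nonempty_iff]]
    decide
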